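/- For any density matrices ρ₀, ρ₁, σ on a finite-dimensional Hilbert space, (1/2)(F(σ,ρ₀) + F(σ,ρ₁)) ≤ (1/2)(1 + √F(ρ₀,ρ₁)). -/

import Mathlib

open Matrix
open scoped ComplexOrder

open Classical in
/-- Square root of a positive semidefinite matrix (junk value `0` otherwise). -/
noncomputable def msqrt {n : Type*} [Fintype n] [DecidableEq n] (A : Matrix n n ℂ) :
    Matrix n n ℂ :=
  if h : A.PosSemidef then
    h.1.eigenvectorUnitary.1 * diagonal ((↑) ∘ (√·) ∘ h.1.eigenvalues) *
      (star h.1.eigenvectorUnitary : Matrix n n ℂ)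
  else 0

/-- Fidelity `F(ρ,σ) = (tr √(√ρ σ √ρ))²`. -/
noncomputable def fid {n : Type*} [Fintype n] [DecidableEq n] (ρ σ : Matrix n n ℂ) : ℝ :=
  ((msqrt (msqrt ρ * σ * msqrt ρ)).trace).re ^ 2

/-! Write `F(σ, ρ) = (tr |√ρ √σ|)²` and take the polar decompositions `√ρᵢ √σ = Vᵢ |√ρᵢ √σ|`.
In the Hilbert–Schmidt space the unit vectors `ψ = √σ` and `φᵢ = Vᵢ* √ρᵢ` then satisfy
`⟪ψ, φᵢ⟫ = tr |√ρᵢ √σ| = √F(σ, ρᵢ)` and `|⟪φ₀, φ₁⟫| = |tr (√ρ₁ √ρ₀ V₀ V₁*)| ≤ tr |√ρ₁ √ρ₀| = √F(ρ₀, ρ₁)`,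
the inequality being the variational bound `|tr (M U)| ≤ tr |M|` for unitary `U`. It remains to see
that `|⟪ψ, φ₀⟫|² + |⟪ψ, φ₁⟫|² ≤ 1 + |⟪φ₀, φ₁⟫|` for unit vectors: the left-hand side is at most the
largest eigenvalue of the Gram matrix of `φ₀, φ₁`. -/

open scoped InnerProductSpace MatrixOrder

section InnerProductSpace
variable {𝕜 E : Type*} [RCLike 𝕜] [NormedAddCommGroup E] [InnerProductSpace 𝕜 E]

theorem sq_norm_inner_add_sq_norm_inner_le {ψ φ₀ φ₁ : E} (hψ : ‖ψ‖ = 1) (hφ₀ : ‖φ₀‖ = 1)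
    (hφ₁ : ‖φ₁‖ = 1) :
    ‖⟪ψ, φ₀⟫_𝕜‖ ^ 2 + ‖⟪ψ, φ₁⟫_𝕜‖ ^ 2 ≤ 1 + ‖⟪φ₀, φ₁⟫_𝕜‖ := by
  set a := ⟪φ₀, ψ⟫_𝕜
  set b := ⟪φ₁, ψ⟫_𝕜
  set S := ‖a‖ ^ 2 + ‖b‖ ^ 2
  rw [← norm_inner_symm φ₀, ← norm_inner_symm φ₁]
  set v := a • φ₀ + b • φ₁
  have hv : S ≤ ‖v‖ := calc
    S = RCLike.re ⟪v, ψ⟫_𝕜 := by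
      rw [inner_add_left, inner_smul_left, inner_smul_left, RCLike.conj_mul, RCLike.conj_mul]
      simp only [map_add, ← RCLike.ofReal_pow, RCLike.ofReal_re, S]
    _ ≤ ‖v‖ := by simpa [hψ] using (RCLike.re_le_norm _).trans (norm_inner_le_norm v ψ)
  have hcross : RCLike.re ⟪a • φ₀, b • φ₁⟫_𝕜 ≤ ‖a‖ * ‖b‖ * ‖⟪φ₀, φ₁⟫_𝕜‖ := calc
    _ ≤ ‖⟪a • φ₀, b • φ₁⟫_𝕜‖ := RCLike.re_le_norm _
    _ = _ := by
      rw [inner_smul_left, inner_smul_right, norm_mul, norm_mul, RCLike.norm_conj, mul_assoc]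
  have hv2 : ‖v‖ ^ 2 ≤ S * (1 + ‖⟪φ₀, φ₁⟫_𝕜‖) := by
    rw [norm_add_sq (𝕜 := 𝕜)]
    simp only [norm_smul, hφ₀, hφ₁, mul_one]
    nlinarith [sq_nonneg (‖a‖ - ‖b‖), norm_nonneg ⟪φ₀, φ₁⟫_𝕜]
  nlinarith [norm_nonneg v, norm_nonneg ⟪φ₀, φ₁⟫_𝕜]

variable [FiniteDimensional 𝕜 E]

theorem LinearMap.norm_map_eq_of_adjoint_comp_self_eq {A B : E →ₗ[𝕜] E}
    (h : A.adjoint ∘ₗ A = B.adjoint ∘ₗ B) (x : E) : ‖A x‖ = ‖B x‖ := by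
  have hsq : ∀ T : E →ₗ[𝕜] E, ‖T x‖ ^ 2 = RCLike.re ⟪(T.adjoint ∘ₗ T) x, x⟫_𝕜 := fun T => by
    rw [comp_apply, adjoint_inner_left, inner_self_eq_norm_sq]
  rw [← sq_eq_sq₀ (norm_nonneg _) (norm_nonneg _), hsq, hsq, h]

theorem LinearMap.exists_linearIsometry_comp_eq_of_adjoint_comp_self_eq {A B : E →ₗ[𝕜] E}
    (h : A.adjoint ∘ₗ A = B.adjoint ∘ₗ B) :
    ∃ U : E →ₗᵢ[𝕜] E, U.toLinearMap ∘ₗ A = B := by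
  have hnorm := norm_map_eq_of_adjoint_comp_self_eq h
  have hker : ker A ≤ ker B := fun x hx => by
    simpa [← norm_eq_zero, ← hnorm] using hx
  let L : range A →ₗ[𝕜] E := (ker A).liftQ B hker ∘ₗ A.quotKerEquivRange.symm
  have hL : ∀ x, L ⟨A x, mem_range_self A x⟩ = B x := fun x => by
    simp only [L, comp_apply, LinearEquiv.coe_coe, quotKerEquivRange_symm_apply_image,
      Submodule.mkQ_apply, Submodule.liftQ_apply]
  refine ⟨LinearIsometry.extend ⟨L, ?_⟩, LinearMap.ext fun x => ?_⟩
  · rintro ⟨_, x, rfl⟩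
    rw [hL x, ← hnorm x]
    rfl
  · exact (LinearIsometry.extend_apply _ ⟨A x, mem_range_self A x⟩).trans (hL x)

end InnerProductSpace

namespace Matrix
variable {𝕜 m n : Type*} [RCLike 𝕜] [Fintype m] [Fintype n]

noncomputable def toHilbertSchmidt (A : Matrix m n 𝕜) : EuclideanSpace 𝕜 (m × n) :=
  WithLp.toLp 2 fun p => A p.1 p.2

theorem inner_toHilbertSchmidt (A B : Matrix m n 𝕜) :
    ⟪A.toHilbertSchmidt, B.toHilbertSchmidt⟫_𝕜 = (Aᴴ * B).trace := by
  simp only [toHilbertSchmidt, PiLp.inner_apply, RCLike.inner_apply, trace, diag, mul_apply,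
    conjTranspose_apply, Fintype.sum_prod_type, RCLike.star_def]
  rw [Finset.sum_comm]
  simp_rw [mul_comm]

theorem norm_toHilbertSchmidt_sq (A : Matrix m n 𝕜) :
    ‖A.toHilbertSchmidt‖ ^ 2 = RCLike.re (Aᴴ * A).trace := by
  rw [← inner_toHilbertSchmidt, inner_self_eq_norm_sq]

theorem norm_trace_of_nonneg {P : Matrix n n 𝕜} (hP : 0 ≤ P) :
    ‖P.trace‖ = RCLike.re P.trace := by
  simpa using congrArg RCLike.re (RCLike.norm_of_nonneg' hP.posSemidef.trace_nonneg)

variable [DecidableEq n]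

theorem norm_toHilbertSchmidt_mul_unitary (A : Matrix m n 𝕜) {U : Matrix n n 𝕜}
    (hU : U ∈ unitaryGroup n 𝕜) : ‖(A * U).toHilbertSchmidt‖ = ‖A.toHilbertSchmidt‖ := by
  rw [← sq_eq_sq₀ (norm_nonneg _) (norm_nonneg _), norm_toHilbertSchmidt_sq,
    norm_toHilbertSchmidt_sq, conjTranspose_mul, Matrix.mul_assoc, trace_mul_comm]
  simp only [Matrix.mul_assoc]
  rw [← star_eq_conjTranspose, Unitary.mul_star_self_of_mem hU, Matrix.mul_one]

theorem norm_toHilbertSchmidt_unitary_mul {A : Matrix n m 𝕜} {U : Matrix n n 𝕜}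
    (hU : U ∈ unitaryGroup n 𝕜) : ‖(U * A).toHilbertSchmidt‖ = ‖A.toHilbertSchmidt‖ := by
  rw [← sq_eq_sq₀ (norm_nonneg _) (norm_nonneg _), norm_toHilbertSchmidt_sq,
    norm_toHilbertSchmidt_sq, conjTranspose_mul, Matrix.mul_assoc, ← Matrix.mul_assoc Uᴴ,
    ← star_eq_conjTranspose, Unitary.star_mul_self_of_mem hU, Matrix.one_mul]

theorem norm_toHilbertSchmidt_sqrt_sq {A : Matrix n n 𝕜} (hA : 0 ≤ A) :
    ‖(CFC.sqrt A).toHilbertSchmidt‖ ^ 2 = RCLike.re A.trace := by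
  rw [norm_toHilbertSchmidt_sq, ← star_eq_conjTranspose, (CFC.sqrt_nonneg A).isSelfAdjoint.star_eq,
    CFC.sqrt_mul_sqrt_self A hA]

theorem norm_toHilbertSchmidt_sqrt_eq_one {A : Matrix n n 𝕜} (hA : 0 ≤ A) (hA₁ : A.trace = 1) :
    ‖(CFC.sqrt A).toHilbertSchmidt‖ = 1 := by
  rw [← pow_eq_one_iff_of_nonneg (norm_nonneg _) two_ne_zero, norm_toHilbertSchmidt_sqrt_sq hA,
    hA₁, RCLike.one_re]

theorem exists_mem_unitaryGroup_eq_mul_abs (M : Matrix n n 𝕜) :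
    ∃ V ∈ unitaryGroup n 𝕜, M = V * CFC.abs M := by
  have habs : (CFC.abs M)ᴴ * CFC.abs M = Mᴴ * M := by
    rw [← star_eq_conjTranspose, (CFC.abs_nonneg M).isSelfAdjoint.star_eq, CFC.abs_mul_abs]
    rfl
  obtain ⟨U, hU⟩ := LinearMap.exists_linearIsometry_comp_eq_of_adjoint_comp_self_eq
    (A := toEuclideanLin (CFC.abs M)) (B := toEuclideanLin M) (by
      simp only [← toEuclideanLin_conjTranspose_eq_adjoint, ← toLpLin_mul_same, habs])
  refine ⟨toEuclideanLin.symm U.toLinearMap, ?_, toEuclideanLin.injective ?_⟩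
  · rw [mem_unitaryGroup_iff', star_eq_conjTranspose]
    apply toEuclideanLin.injective
    rw [toLpLin_mul_same, toEuclideanLin_conjTranspose_eq_adjoint, LinearEquiv.apply_symm_apply,
      U.adjoint_comp_self', toLpLin_one]
  · rw [toLpLin_mul_same, LinearEquiv.apply_symm_apply, hU]

theorem norm_trace_mul_unitary_le_of_nonneg {P U : Matrix n n 𝕜} (hP : 0 ≤ P)
    (hU : U ∈ unitaryGroup n 𝕜) : ‖(P * U).trace‖ ≤ ‖P.trace‖ := by
  set R := CFC.sqrt P
  have hR : Rᴴ = R := (CFC.sqrt_nonneg P).isSelfAdjoint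
  calc ‖(P * U).trace‖ = ‖⟪R.toHilbertSchmidt, (R * U).toHilbertSchmidt⟫_𝕜‖ := by
        rw [inner_toHilbertSchmidt, hR, ← Matrix.mul_assoc, CFC.sqrt_mul_sqrt_self P hP]
    _ ≤ ‖R.toHilbertSchmidt‖ * ‖(R * U).toHilbertSchmidt‖ := norm_inner_le_norm _ _
    _ = ‖P.trace‖ := by
        rw [norm_toHilbertSchmidt_mul_unitary _ hU, ← sq, norm_toHilbertSchmidt_sqrt_sq hP,
          norm_trace_of_nonneg hP]

theorem norm_trace_mul_unitary_le (M : Matrix n n 𝕜) {U : Matrix n n 𝕜}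
    (hU : U ∈ unitaryGroup n 𝕜) : ‖(M * U).trace‖ ≤ ‖(CFC.abs M).trace‖ := by
  obtain ⟨V, hV, hM⟩ := exists_mem_unitaryGroup_eq_mul_abs M
  calc ‖(M * U).trace‖ = ‖(V * CFC.abs M * U).trace‖ := by rw [← hM]
    _ = ‖(CFC.abs M * (U * V)).trace‖ := by
        rw [Matrix.mul_assoc, trace_mul_comm, Matrix.mul_assoc]
    _ ≤ _ := norm_trace_mul_unitary_le_of_nonneg (CFC.abs_nonneg M) (mul_mem hU hV)

theorem inner_toHilbertSchmidt_star_mul_eq_trace_abs {S R V : Matrix n n 𝕜}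
    (hS : IsSelfAdjoint S) (hV : V ∈ unitaryGroup n 𝕜) (hpolar : R * S = V * CFC.abs (R * S)) :
    ⟪S.toHilbertSchmidt, (star V * R).toHilbertSchmidt⟫_𝕜 = (CFC.abs (R * S)).trace := by
  rw [inner_toHilbertSchmidt, ← star_eq_conjTranspose, hS.star_eq, trace_mul_comm,
    Matrix.mul_assoc]
  conv_lhs => rw [hpolar, ← Matrix.mul_assoc, Unitary.star_mul_self_of_mem hV, Matrix.one_mul]

theorem norm_inner_toHilbertSchmidt_star_mul_le {R₀ R₁ V₀ V₁ : Matrix n n 𝕜}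
    (hR₀ : IsSelfAdjoint R₀) (hV₀ : V₀ ∈ unitaryGroup n 𝕜) (hV₁ : V₁ ∈ unitaryGroup n 𝕜) :
    ‖⟪(star V₀ * R₀).toHilbertSchmidt, (star V₁ * R₁).toHilbertSchmidt⟫_𝕜‖
      ≤ ‖(CFC.abs (R₁ * R₀)).trace‖ := by
  have htrace : ⟪(star V₀ * R₀).toHilbertSchmidt, (star V₁ * R₁).toHilbertSchmidt⟫_𝕜
      = (R₁ * R₀ * (V₀ * star V₁)).trace := by
    rw [inner_toHilbertSchmidt, ← star_eq_conjTranspose, star_mul, hR₀.star_eq, star_star]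
    simp only [← Matrix.mul_assoc]
    rw [trace_mul_comm]
    simp only [Matrix.mul_assoc]
  rw [htrace]
  exact norm_trace_mul_unitary_le (R₁ * R₀) (mul_mem hV₀ (Unitary.star_mem hV₁))

end Matrix

theorem msqrt_eq_cfcSqrt {n : Type*} [Fintype n] [DecidableEq n] (A : Matrix n n ℂ) :
    msqrt A = CFC.sqrt A := by
  by_cases hA : A.PosSemidef
  · rw [msqrt, dif_pos hA, CFC.sqrt_eq_cfc, cfc_nnreal_eq_real _ A hA.nonneg, hA.1.cfc_eq]
    simp only [IsHermitian.cfc, Unitary.conjStarAlgAut_apply, Real.coe_sqrt, Real.coe_toNNReal']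
    congr 3
    funext i
    simp [max_eq_left (hA.eigenvalues_nonneg i)]
  · rw [msqrt, dif_neg hA, CFC.sqrt, cfcₙ_apply_of_not_predicate]
    rwa [← nonneg_iff_posSemidef] at hA

theorem fid_eq_sq_norm_trace_abs {n : Type*} [Fintype n] [DecidableEq n] (ρ : Matrix n n ℂ)
    {σ : Matrix n n ℂ} (hσ : 0 ≤ σ) :
    fid ρ σ = ‖(CFC.abs (CFC.sqrt σ * CFC.sqrt ρ)).trace‖ ^ 2 := by
  have hconj : CFC.sqrt ρ * σ * CFC.sqrt ρ
      = star (CFC.sqrt σ * CFC.sqrt ρ) * (CFC.sqrt σ * CFC.sqrt ρ) := by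
    rw [star_mul, (CFC.sqrt_nonneg σ).isSelfAdjoint.star_eq,
      (CFC.sqrt_nonneg ρ).isSelfAdjoint.star_eq]
    conv_lhs => rw [← CFC.sqrt_mul_sqrt_self σ hσ]
    simp only [Matrix.mul_assoc]
  rw [fid, msqrt_eq_cfcSqrt, msqrt_eq_cfcSqrt, hconj, ← CFC.abs,
    norm_trace_of_nonneg (CFC.abs_nonneg _)]
  rfl

theorem avg_fidelity_le {n : Type*} [Fintype n] [DecidableEq n]
    (ρ₀ ρ₁ σ : Matrix n n ℂ)
    (h₀ : ρ₀.PosSemidef) (h₀t : ρ₀.trace = 1)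
    (h₁ : ρ₁.PosSemidef) (h₁t : ρ₁.trace = 1)
    (hσ : σ.PosSemidef) (hσt : σ.trace = 1) :
    (1 / 2) * (fid σ ρ₀ + fid σ ρ₁) ≤ (1 / 2) * (1 + Real.sqrt (fid ρ₀ ρ₁)) := by
  rw [fid_eq_sq_norm_trace_abs _ h₀.nonneg, fid_eq_sq_norm_trace_abs _ h₁.nonneg,
    fid_eq_sq_norm_trace_abs _ h₁.nonneg, Real.sqrt_sq (norm_nonneg _)]
  have hS := (CFC.sqrt_nonneg σ).isSelfAdjoint
  obtain ⟨V₀, hV₀, hpolar₀⟩ := exists_mem_unitaryGroup_eq_mul_abs (CFC.sqrt ρ₀ * CFC.sqrt σ)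
  obtain ⟨V₁, hV₁, hpolar₁⟩ := exists_mem_unitaryGroup_eq_mul_abs (CFC.sqrt ρ₁ * CFC.sqrt σ)
  have hunit : ∀ {ρ V : Matrix n n ℂ}, ρ.PosSemidef → ρ.trace = 1 → V ∈ unitaryGroup n ℂ →
      ‖(star V * CFC.sqrt ρ).toHilbertSchmidt‖ = 1 := fun hρ hρt hV =>
    (norm_toHilbertSchmidt_unitary_mul (Unitary.star_mem hV)).trans
      (norm_toHilbertSchmidt_sqrt_eq_one hρ.nonneg hρt)
  have key := sq_norm_inner_add_sq_norm_inner_le (𝕜 := ℂ)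
    (norm_toHilbertSchmidt_sqrt_eq_one hσ.nonneg hσt) (hunit h₀ h₀t hV₀) (hunit h₁ h₁t hV₁)
  rw [inner_toHilbertSchmidt_star_mul_eq_trace_abs hS hV₀ hpolar₀,
    inner_toHilbertSchmidt_star_mul_eq_trace_abs hS hV₁ hpolar₁] at key
  linarith [norm_inner_toHilbertSchmidt_star_mul_le (R₁ := CFC.sqrt ρ₁)
    (CFC.sqrt_nonneg ρ₀).isSelfAdjoint hV₀ hV₁]
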